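/- arXiv:1307.8403 — 2 statements merged into one kernel-verified Lean document; each statement's English description precedes it below -/
import Mathlib

section
/- Let X be the solution of the recursive distributional equation X =_d √U·X + √U·(1−√U). Then P(0 ≤ X ≤ 1) = 1. -/
/-!
The overshoot `e x = max (x - 1) (-x)` is positive exactly off `[0, 1]`. For
`f = √u x + √u (1 - √u)` we have `f - 1 = √u (x - 1) - (1 - √u)²` and `-f = √u (-x) - √u (1 - √u)`,
so `e f ≤ √u e x`. Hence `e f > t` forces `e x > t`, and even `e x > 2t` when `u ≤ 1/4`; as this
event has positive probability, the RDE gives `P(e X > t) ≤ P(e X > 2t)`. Iterating,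
`P(e X > t) ≤ P(e X > 2ⁿ t) → 0` for every `t > 0`, hence `P(e X > 0) = 0`.
-/

open MeasureTheory

noncomputable section

/-- The uniform distribution on `[0,1]`. -/
def unif : Measure ℝ := volume.restrict (Set.Icc 0 1)

/-- The map `(x, u) ↦ √u·x + √u·(1 − √u)`. -/
def rdeMap (q : ℝ × ℝ) : ℝ :=
  Real.sqrt q.2 * q.1 + Real.sqrt q.2 * (1 - Real.sqrt q.2)

/-- `μ` is a (probability) solution of the recursive distributional equation
`X =_d √U·X + √U·(1 − √U)` with `X, U` independent and `U` uniform on `[0,1]`. -/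
def IsRDESolution (μ : Measure ℝ) : Prop :=
  IsProbabilityMeasure μ ∧ Measure.map rdeMap (μ.prod unif) = μ

section General

variable {α β : Type*} [MeasurableSpace α] [MeasurableSpace β]

theorem measure_le_of_map_prod_eq {μ : Measure α} [IsFiniteMeasure μ] {ν : Measure β}
    [IsProbabilityMeasure ν] {φ : α × β → α} (hφ : Measurable φ) (hμ : (μ.prod ν).map φ = μ)
    {S T : Set α} {B : Set β} (hS : MeasurableSet S) (hB : MeasurableSet B) (hB₀ : ν B ≠ 0)
    (h : ∀ᵐ u ∂ν, ∀ x, φ (x, u) ∈ S → x ∈ S ∧ (u ∈ B → x ∈ T)) : μ S ≤ μ T := by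
  set N := {u | ¬∀ x, φ (x, u) ∈ S → x ∈ S ∧ (u ∈ B → x ∈ T)}
  have hN : ν N = 0 := ae_iff.mp h
  have hcover : φ ⁻¹' S ⊆ T ×ˢ B ∪ S ×ˢ Bᶜ ∪ Set.univ ×ˢ N := by
    rintro ⟨x, u⟩ hxu
    by_cases hu : u ∈ N
    · exact Or.inr ⟨trivial, hu⟩
    obtain ⟨hxS, hxT⟩ := not_not.mp hu x hxu
    by_cases huB : u ∈ B
    · exact Or.inl (Or.inl ⟨hxT huB, huB⟩)
    · exact Or.inl (Or.inr ⟨hxS, huB⟩)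
  have key : μ S * ν B + μ S * ν Bᶜ ≤ μ T * ν B + μ S * ν Bᶜ :=
    calc μ S * ν B + μ S * ν Bᶜ = μ S := by
          rw [← mul_add, measure_add_measure_compl hB, measure_univ, mul_one]
      _ = (μ.prod ν) (φ ⁻¹' S) := by rw [← Measure.map_apply hφ hS, hμ]
      _ ≤ (μ.prod ν) (T ×ˢ B ∪ S ×ˢ Bᶜ ∪ Set.univ ×ˢ N) := measure_mono hcover
      _ ≤ μ T * ν B + μ S * ν Bᶜ + μ Set.univ * ν N := by
          simp only [← Measure.prod_prod]
          exact (measure_union_le _ _).trans (add_le_add_left (measure_union_le _ _) _)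
      _ = μ T * ν B + μ S * ν Bᶜ := by rw [hN, mul_zero, add_zero]
  exact (ENNReal.mul_le_mul_iff_left hB₀ (measure_ne_top ν B)).mp
    (ENNReal.le_of_add_le_add_right (by finiteness) key)

variable {μ : Measure α} [IsFiniteMeasure μ] {g : α → ℝ}

theorem measure_setOf_lt_eq_zero_of_le_two_mul (hg : Measurable g)
    (h : ∀ t > 0, μ {x | t < g x} ≤ μ {x | 2 * t < g x}) {t : ℝ} (ht : 0 < t) :
    μ {x | t < g x} = 0 := by
  have iter : ∀ n : ℕ, μ {x | t < g x} ≤ μ {x | 2 ^ n * t < g x} := by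
    intro n
    induction n with
    | zero => simp
    | succ n ih =>
      refine ih.trans ((h _ (by positivity)).trans_eq ?_)
      rw [pow_succ, mul_comm _ 2, mul_assoc]
  have hanti : Antitone fun n : ℕ => {x | 2 ^ n * t < g x} := fun m n hmn x hx =>
    lt_of_le_of_lt (mul_le_mul_of_nonneg_right (pow_le_pow_right₀ one_le_two hmn) ht.le) hx
  have hempty : ⋂ n : ℕ, {x | 2 ^ n * t < g x} = ∅ := by
    refine Set.eq_empty_of_forall_notMem fun x hx => ?_
    obtain ⟨n, hn⟩ := pow_unbounded_of_one_lt (g x / t) one_lt_two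
    rw [div_lt_iff₀ ht] at hn
    exact lt_asymm hn (Set.mem_iInter.mp hx n)
  refine le_antisymm ?_ zero_le
  calc μ {x | t < g x} ≤ ⨅ n : ℕ, μ {x | 2 ^ n * t < g x} := le_iInf iter
    _ = 0 := by
      rw [← hanti.measure_iInter
        (fun n => (measurableSet_lt measurable_const hg).nullMeasurableSet)
        ⟨0, measure_ne_top _ _⟩, hempty, measure_empty]

theorem measure_setOf_pos_eq_zero_of_le_two_mul (hg : Measurable g)
    (h : ∀ t > 0, μ {x | t < g x} ≤ μ {x | 2 * t < g x}) : μ {x | 0 < g x} = 0 := by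
  have hunion : {x | 0 < g x} = ⋃ n : ℕ, {x | 1 / (n + 1 : ℝ) < g x} := by
    ext x
    simp only [Set.mem_ofPred_eq, Set.mem_iUnion]
    exact ⟨fun hx => exists_nat_one_div_lt hx, fun ⟨n, hn⟩ => lt_trans (by positivity) hn⟩
  rw [hunion]
  exact measure_iUnion_null fun n => measure_setOf_lt_eq_zero_of_le_two_mul hg h (by positivity)

end General

instance : IsProbabilityMeasure unif :=
  ⟨by simp [unif, Real.volume_Icc]⟩

lemma unif_Icc_zero_quarter_ne_zero : unif (Set.Icc 0 (1 / 4)) ≠ 0 := by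
  rw [unif, Measure.restrict_apply measurableSet_Icc,
    Set.inter_eq_left.mpr (Set.Icc_subset_Icc le_rfl (by norm_num)), Real.volume_Icc]
  norm_num

lemma measurable_rdeMap : Measurable rdeMap := by
  unfold rdeMap
  fun_prop

def overshoot (x : ℝ) : ℝ := max (x - 1) (-x)

lemma continuous_overshoot : Continuous overshoot := by
  unfold overshoot
  fun_prop

lemma zero_lt_overshoot_iff {x : ℝ} : 0 < overshoot x ↔ x ∉ Set.Icc 0 1 := by
  simp only [overshoot, lt_max_iff, Set.mem_Icc, not_and_or, not_le]
  constructor <;> rintro (h | h) <;> [right; left; right; left] <;> linarith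

lemma overshoot_rdeMap_le {x u : ℝ} (hu : u ≤ 1) :
    overshoot (rdeMap (x, u)) ≤ √u * overshoot x := by
  have hs₀ : 0 ≤ √u := Real.sqrt_nonneg u
  have hs₁ : √u ≤ 1 := Real.sqrt_le_one.mpr hu
  simp only [overshoot, rdeMap, max_le_iff]
  constructor
  · nlinarith [mul_le_mul_of_nonneg_left (le_max_left (x - 1) (-x)) hs₀, sq_nonneg (1 - √u)]
  · nlinarith [mul_le_mul_of_nonneg_left (le_max_right (x - 1) (-x)) hs₀,
      mul_nonneg hs₀ (sub_nonneg.mpr hs₁)]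

lemma IsRDESolution.measure_lt_overshoot_le {μ : Measure ℝ} (hμ : IsRDESolution μ) {t : ℝ}
    (ht : 0 < t) : μ {x | t < overshoot x} ≤ μ {x | 2 * t < overshoot x} := by
  have := hμ.1
  refine measure_le_of_map_prod_eq measurable_rdeMap hμ.2
    (measurableSet_lt measurable_const continuous_overshoot.measurable) measurableSet_Icc
    unif_Icc_zero_quarter_ne_zero ?_
  filter_upwards [(ae_restrict_mem measurableSet_Icc : ∀ᵐ u ∂unif, u ∈ Set.Icc (0 : ℝ) 1)]
    with u hu x hx
  have hle : t < √u * overshoot x := hx.trans_le (overshoot_rdeMap_le hu.2)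
  have hs₀ : 0 ≤ √u := Real.sqrt_nonneg u
  have hs₁ : √u ≤ 1 := Real.sqrt_le_one.mpr hu.2
  have hpos : 0 < overshoot x := pos_of_mul_pos_right (ht.trans hle) hs₀
  refine ⟨by nlinarith, fun hB => ?_⟩
  have hs : √u ≤ 1 / 2 := (Real.sqrt_le_left (by norm_num)).mpr (by linarith [hB.2])
  nlinarith

/-- The solution `X` of the RDE `X =_d √U·X + √U·(1 − √U)` satisfies `P(0 ≤ X ≤ 1) = 1`. -/
theorem rde_support (μ : Measure ℝ) (hμ : IsRDESolution μ) :
    μ (Set.Icc (0 : ℝ) 1) = 1 := by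
  have := hμ.1
  have hcompl : (Set.Icc (0 : ℝ) 1)ᶜ = {x | 0 < overshoot x} := by
    ext x
    simp [zero_lt_overshoot_iff]
  rw [← prob_compl_eq_zero_iff measurableSet_Icc, hcompl]
  exact measure_setOf_pos_eq_zero_of_le_two_mul continuous_overshoot.measurable
    fun t ht => hμ.measure_lt_overshoot_le ht
end
end

section
/- Let X be the solution of the recursive distributional equation X =_d √U·X + √U·(1−√U), and let f be the version of its Lebesgue density satisfying the integral equation f(t) = 2·∫_{2√t−1}^{t} g(x,t)·f(x) dx + ∫_{t}^{1} (g(x,t) − 1)·f(x) dx for all t ∈ [0,1] and f = 0 outside [0,1], where g(x,t) := (1+x)/√((1+x)² − 4t). Then f is bounded with sup_{t ∈ ℝ} f(t) ≤ 109. -/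
/-!
Since `g(x, t) ≥ 1` for `0 ≤ t < x`, the integral equation gives `f t ≤ 2 ∫ K(t, y) f(y) dy` with
`K(t, y) = g(y, t) · 1{2√t - 1 < y ≤ 1}`. Iterating once and exchanging the integrals,
`f t ≤ 4 ∫ f(x) (∫ K(t, y) K(y, x) dy) dx`. With `a = 2√t - 1` and `b = (1 + x)² / 4`,
`K(t, y) ≤ 2 / √(y - a)` and `K(y, x) ≤ 1 / √(b - y)`, and the product vanishes unless `a < y < b`;
so the inner integral is at most twice `∫_a^b dy / √((y - a)(b - y)) ≤ 4√2`. As `∫ f = 1`,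
this gives `f ≤ 48`.
-/

open MeasureTheory

noncomputable section

/-- The function `g(x,t) = (1+x)/√((1+x)² − 4t)`. -/
def gdens (x t : ℝ) : ℝ := (1 + x) / Real.sqrt ((1 + x) ^ 2 - 4 * t)

/-- `f` is the version of the Lebesgue density of `μ` which vanishes outside `[0,1]` and
satisfies the integral equation
`f(t) = 2·∫_{2√t−1}^{t} g(x,t)·f(x) dx + ∫_{t}^{1} (g(x,t) − 1)·f(x) dx` on `[0,1]`. -/
def IsRDEDensity (μ : Measure ℝ) (f : ℝ → ℝ) : Prop :=
  Measurable f ∧ (∀ t, 0 ≤ f t) ∧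
  μ = volume.withDensity (fun t => ENNReal.ofReal (f t)) ∧
  (∀ t : ℝ, t < 0 ∨ 1 < t → f t = 0) ∧
  ∀ t ∈ Set.Icc (0 : ℝ) 1,
    f t = 2 * (∫ x in (2 * Real.sqrt t - 1)..t, gdens x t * f x)
          + ∫ x in t..(1 : ℝ), (gdens x t - 1) * f x

open Set
open scoped ENNReal

theorem ofReal_intervalIntegral_le_setLIntegral {h : ℝ → ℝ} {a b : ℝ} (hab : a ≤ b)
    (h0 : ∀ x ∈ Ioc a b, 0 ≤ h x) :
    ENNReal.ofReal (∫ x in a..b, h x) ≤ ∫⁻ x in Ioc a b, ENNReal.ofReal (h x) := by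
  rw [intervalIntegral.integral_of_le hab]
  calc ENNReal.ofReal (∫ x in Ioc a b, h x) ≤ ‖∫ x in Ioc a b, h x‖ₑ := Real.ofReal_le_enorm _
    _ ≤ ∫⁻ x in Ioc a b, ‖h x‖ₑ := enorm_integral_le_lintegral_enorm _
    _ = ∫⁻ x in Ioc a b, ENNReal.ofReal (h x) :=
      setLIntegral_congr_fun measurableSet_Ioc fun x hx => by
        rw [Real.enorm_eq_ofReal (h0 x hx)]

theorem setLIntegral_Ioc_ofReal_eq {h : ℝ → ℝ} {a b : ℝ} (hab : a ≤ b)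
    (hint : IntervalIntegrable h volume a b) (h0 : ∀ x ∈ Ioc a b, 0 ≤ h x) :
    ∫⁻ x in Ioc a b, ENNReal.ofReal (h x) = ENNReal.ofReal (∫ x in a..b, h x) := by
  rw [intervalIntegral.integral_of_le hab, ofReal_integral_eq_lintegral_ofReal hint.1
    ((ae_restrict_mem measurableSet_Ioc).mono h0)]

theorem one_div_sqrt_eq_rpow {x : ℝ} (hx : 0 ≤ x) : 1 / √x = x ^ (-(1 / 2) : ℝ) := by
  rw [Real.rpow_neg hx, Real.sqrt_eq_rpow, one_div]

theorem integral_rpow_neg_half (c : ℝ) :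
    ∫ x in (0 : ℝ)..c, x ^ (-(1 / 2) : ℝ) = 2 * √c := by
  rw [integral_rpow (Or.inl (by norm_num)), Real.zero_rpow (by norm_num), Real.sqrt_eq_rpow]
  norm_num
  ring

theorem setLIntegral_Ioc_one_div_sqrt_sub_left {a b : ℝ} (hab : a ≤ b) :
    ∫⁻ y in Ioc a b, ENNReal.ofReal (1 / √(y - a)) = ENNReal.ofReal (2 * √(b - a)) := by
  have hint : IntervalIntegrable (fun y => (y - a) ^ (-(1 / 2) : ℝ)) volume a b := by
    simpa using (intervalIntegral.intervalIntegrable_rpow' (a := 0) (b := b - a)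
      (by norm_num : (-1 : ℝ) < -(1 / 2))).comp_sub_right a
  rw [setLIntegral_congr_fun measurableSet_Ioc fun y hy => by
      rw [one_div_sqrt_eq_rpow (sub_nonneg.2 hy.1.le)],
    setLIntegral_Ioc_ofReal_eq hab hint fun y hy => Real.rpow_nonneg (sub_nonneg.2 hy.1.le) _,
    intervalIntegral.integral_comp_sub_right (fun x => x ^ (-(1 / 2) : ℝ)), sub_self,
    integral_rpow_neg_half]

theorem setLIntegral_Ioc_one_div_sqrt_sub_right {a b : ℝ} (hab : a ≤ b) :
    ∫⁻ y in Ioc a b, ENNReal.ofReal (1 / √(b - y)) = ENNReal.ofReal (2 * √(b - a)) := by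
  have hint : IntervalIntegrable (fun y => (b - y) ^ (-(1 / 2) : ℝ)) volume a b := by
    simpa using ((intervalIntegral.intervalIntegrable_rpow' (a := 0) (b := b - a)
      (by norm_num : (-1 : ℝ) < -(1 / 2))).comp_sub_left b).symm
  rw [setLIntegral_congr_fun measurableSet_Ioc fun y hy => by
      rw [one_div_sqrt_eq_rpow (sub_nonneg.2 hy.2)],
    setLIntegral_Ioc_ofReal_eq hab hint fun y hy => Real.rpow_nonneg (sub_nonneg.2 hy.2) _,
    intervalIntegral.integral_comp_sub_left (fun x => x ^ (-(1 / 2) : ℝ)), sub_self,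
    integral_rpow_neg_half]

theorem one_div_sqrt_mul_one_div_sqrt_le {u v : ℝ} (hu : 0 < u) (hv : 0 < v) :
    1 / √u * (1 / √v) ≤ √(2 / (u + v)) * (1 / √u + 1 / √v) := by
  wlog huv : u ≤ v generalizing u v
  · simpa only [mul_comm, add_comm] using this hv hu (le_of_not_ge huv)
  have hv' : 1 / √v ≤ √(2 / (u + v)) := by
    rw [← Real.sqrt_one, ← Real.sqrt_div' _ hv.le]
    exact Real.sqrt_le_sqrt (by rw [div_le_div_iff₀ hv (by positivity)]; linarith)
  calc 1 / √u * (1 / √v) ≤ √(2 / (u + v)) * (1 / √u) := by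
        rw [mul_comm]; exact mul_le_mul_of_nonneg_right hv' (by positivity)
    _ ≤ √(2 / (u + v)) * (1 / √u + 1 / √v) :=
        mul_le_mul_of_nonneg_left (le_add_of_nonneg_right (by positivity)) (Real.sqrt_nonneg _)

theorem setLIntegral_Ioo_one_div_sqrt_mul_one_div_sqrt_le (a b : ℝ) :
    ∫⁻ y in Ioo a b, ENNReal.ofReal (1 / √(y - a)) * ENNReal.ofReal (1 / √(b - y)) ≤ 6 := by
  rcases le_or_gt b a with hba | hab
  · simp [Ioo_eq_empty_of_le hba]
  have hL : 0 < b - a := sub_pos.2 hab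
  calc ∫⁻ y in Ioo a b, ENNReal.ofReal (1 / √(y - a)) * ENNReal.ofReal (1 / √(b - y))
      ≤ ∫⁻ y in Ioo a b, ENNReal.ofReal √(2 / (b - a)) *
          (ENNReal.ofReal (1 / √(y - a)) + ENNReal.ofReal (1 / √(b - y))) := by
        refine setLIntegral_mono' measurableSet_Ioo fun y hy => ?_
        have hpt := one_div_sqrt_mul_one_div_sqrt_le (sub_pos.2 hy.1) (sub_pos.2 hy.2)
        rw [sub_add_sub_cancel'] at hpt
        rw [← ENNReal.ofReal_mul (by positivity), ← ENNReal.ofReal_add (by positivity)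
          (by positivity), ← ENNReal.ofReal_mul (by positivity)]
        exact ENNReal.ofReal_le_ofReal hpt
    _ ≤ ∫⁻ y in Ioc a b, ENNReal.ofReal √(2 / (b - a)) *
          (ENNReal.ofReal (1 / √(y - a)) + ENNReal.ofReal (1 / √(b - y))) :=
        lintegral_mono_set Ioo_subset_Ioc_self
    _ = ENNReal.ofReal √(2 / (b - a)) *
          (ENNReal.ofReal (2 * √(b - a)) + ENNReal.ofReal (2 * √(b - a))) := by
        rw [lintegral_const_mul' _ _ ENNReal.ofReal_ne_top, lintegral_add_left (by fun_prop),
          setLIntegral_Ioc_one_div_sqrt_sub_left hab.le,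
          setLIntegral_Ioc_one_div_sqrt_sub_right hab.le]
    _ = ENNReal.ofReal (4 * √2) := by
        rw [← ENNReal.ofReal_add (by positivity) (by positivity),
          ← ENNReal.ofReal_mul (by positivity), Real.sqrt_div zero_le_two]
        congr 1
        field_simp
        ring
    _ ≤ ENNReal.ofReal 6 :=
        ENNReal.ofReal_le_ofReal (by nlinarith [Real.sq_sqrt zero_le_two, Real.sqrt_nonneg 2])
    _ = 6 := ENNReal.ofReal_ofNat 6

theorem gdens_nonneg {x : ℝ} (t : ℝ) (hx : -1 ≤ x) : 0 ≤ gdens x t :=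
  div_nonneg (by linarith) (Real.sqrt_nonneg _)

theorem one_le_gdens {x t : ℝ} (ht : 0 ≤ t) (htx : t < x) : 1 ≤ gdens x t := by
  have hx : 0 < 1 + x := by linarith
  have hpos : 0 < (1 + x) ^ 2 - 4 * t := by
    nlinarith [mul_pos (sub_pos.2 htx) (by linarith : 0 < x + t + 2), sq_nonneg (1 - t)]
  refine (one_le_div (Real.sqrt_pos.2 hpos)).2 ?_
  calc √((1 + x) ^ 2 - 4 * t) ≤ √((1 + x) ^ 2) := Real.sqrt_le_sqrt (by linarith)
    _ = 1 + x := Real.sqrt_sq hx.le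

theorem gdens_le_two_mul_one_div_sqrt {y t : ℝ} (ht : 0 ≤ t) (hy : 2 * √t - 1 < y)
    (hy1 : y ≤ 1) : gdens y t ≤ 2 * (1 / √(y - (2 * √t - 1))) := by
  have hs := Real.sqrt_nonneg t
  have hB : 0 < 1 + y + 2 * √t := by linarith
  have hfac : (1 + y) ^ 2 - 4 * t = (y - (2 * √t - 1)) * (1 + y + 2 * √t) := by
    linear_combination 4 * Real.sq_sqrt ht
  have hnum : 1 + y ≤ 2 * √(1 + y + 2 * √t) := by
    nlinarith [Real.sq_sqrt hB.le, Real.sqrt_nonneg (1 + y + 2 * √t)]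
  have hsB : 0 < √(1 + y + 2 * √t) := Real.sqrt_pos.2 hB
  rw [gdens, hfac, Real.sqrt_mul (by linarith)]
  calc (1 + y) / (√(y - (2 * √t - 1)) * √(1 + y + 2 * √t))
      = (1 + y) / √(1 + y + 2 * √t) * (1 / √(y - (2 * √t - 1))) := by
        rw [div_mul_div_comm, mul_one, mul_comm]
    _ ≤ 2 * (1 / √(y - (2 * √t - 1))) :=
        mul_le_mul_of_nonneg_right ((div_le_iff₀ hsB).2 hnum) (by positivity)

theorem gdens_le_one_div_sqrt {x : ℝ} (y : ℝ) (hx : x ≤ 1) :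
    gdens x y ≤ 1 / √((1 + x) ^ 2 / 4 - y) := by
  rw [gdens, show (1 + x) ^ 2 - 4 * y = 2 ^ 2 * ((1 + x) ^ 2 / 4 - y) by ring,
    Real.sqrt_mul (by positivity), Real.sqrt_sq zero_le_two]
  calc (1 + x) / (2 * √((1 + x) ^ 2 / 4 - y))
      = (1 + x) / 2 * (1 / √((1 + x) ^ 2 / 4 - y)) := by rw [div_mul_div_comm, mul_one]
    _ ≤ 1 * (1 / √((1 + x) ^ 2 / 4 - y)) :=
        mul_le_mul_of_nonneg_right (by linarith) (by positivity)
    _ = 1 / √((1 + x) ^ 2 / 4 - y) := one_mul _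

theorem lt_sq_div_four_of_two_mul_sqrt_sub_one_lt {x y : ℝ} (h : 2 * √y - 1 < x) :
    y < (1 + x) ^ 2 / 4 := by
  have hpos : 0 < (1 + x) / 2 := by linarith [Real.sqrt_nonneg y]
  rcases lt_or_ge y 0 with hy | hy
  · exact hy.trans_le (by positivity)
  · have := (Real.sqrt_lt' hpos).1 (by linarith : √y < (1 + x) / 2)
    linarith

def rdeKernel (t : ℝ) : ℝ → ℝ≥0∞ :=
  (Ioc (2 * √t - 1) 1).indicator fun y => ENNReal.ofReal (gdens y t)

theorem measurable_rdeKernel : Measurable (Function.uncurry rdeKernel) := by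
  have hS : MeasurableSet {p : ℝ × ℝ | p.2 ∈ Ioc (2 * √p.1 - 1) 1} :=
    (measurableSet_lt (by fun_prop) measurable_snd).inter
      (measurableSet_le measurable_snd measurable_const)
  have hg : Measurable fun p : ℝ × ℝ => ENNReal.ofReal (gdens p.2 p.1) := by
    unfold gdens; fun_prop
  exact (hg.indicator hS : _)

theorem lintegral_rdeKernel_mul_rdeKernel_le {t : ℝ} (ht : 0 ≤ t) (x : ℝ) :
    ∫⁻ y, rdeKernel t y * rdeKernel y x ≤ 12 := by
  set a := 2 * √t - 1
  set b := (1 + x) ^ 2 / 4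
  have hpt : ∀ y, rdeKernel t y * rdeKernel y x ≤ 2 * (Ioo a b).indicator
      (fun y => ENNReal.ofReal (1 / √(y - a)) * ENNReal.ofReal (1 / √(b - y))) y := by
    intro y
    by_cases hy : y ∈ Ioc a 1
    swap
    · simp [rdeKernel, a, indicator_of_notMem hy]
    by_cases hx : x ∈ Ioc (2 * √y - 1) 1
    swap
    · simp [rdeKernel, indicator_of_notMem hx]
    have hyab : y ∈ Ioo a b := ⟨hy.1, lt_sq_div_four_of_two_mul_sqrt_sub_one_lt hx.1⟩
    rw [rdeKernel, rdeKernel, indicator_of_mem hy, indicator_of_mem hx, indicator_of_mem hyab,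
      ← mul_assoc, ← ENNReal.ofReal_ofNat 2, ← ENNReal.ofReal_mul zero_le_two]
    exact mul_le_mul' (ENNReal.ofReal_le_ofReal (gdens_le_two_mul_one_div_sqrt ht hy.1 hy.2))
      (ENNReal.ofReal_le_ofReal (gdens_le_one_div_sqrt y hx.2))
  calc ∫⁻ y, rdeKernel t y * rdeKernel y x
      ≤ ∫⁻ y, 2 * (Ioo a b).indicator
          (fun y => ENNReal.ofReal (1 / √(y - a)) * ENNReal.ofReal (1 / √(b - y))) y :=
        lintegral_mono hpt
    _ = 2 * ∫⁻ y in Ioo a b, ENNReal.ofReal (1 / √(y - a)) * ENNReal.ofReal (1 / √(b - y)) := by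
        rw [lintegral_const_mul' _ _ ENNReal.ofNat_ne_top, lintegral_indicator measurableSet_Ioo]
    _ ≤ 2 * 6 := by gcongr; exact setLIntegral_Ioo_one_div_sqrt_mul_one_div_sqrt_le a b
    _ = 12 := by norm_num

theorem le_mul_lintegral_of_le_lintegral_kernel {α : Type*} [MeasurableSpace α] {μ : Measure α}
    [SFinite μ] {K : α → α → ℝ≥0∞} {F : α → ℝ≥0∞} {c M : ℝ≥0∞}
    (hK : Measurable (Function.uncurry K)) (hF : Measurable F)
    (hFK : ∀ s, F s ≤ c * ∫⁻ y, K s y * F y ∂μ) (t : α)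
    (hKK : ∀ x, ∫⁻ y, K t y * K y x ∂μ ≤ M) :
    F t ≤ c ^ 2 * M * ∫⁻ x, F x ∂μ := by
  calc F t ≤ c * ∫⁻ y, K t y * F y ∂μ := hFK t
    _ ≤ c * ∫⁻ y, K t y * (c * ∫⁻ x, K y x * F x ∂μ) ∂μ := by gcongr with y; exact hFK y
    _ = c ^ 2 * ∫⁻ y, ∫⁻ x, K t y * K y x * F x ∂μ ∂μ := by
        have hinner : ∀ y, K t y * (c * ∫⁻ x, K y x * F x ∂μ) =
            c * ∫⁻ x, K t y * K y x * F x ∂μ := fun y => by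
          rw [mul_left_comm, ← lintegral_const_mul _ (by fun_prop)]
          simp_rw [mul_assoc]
        simp_rw [hinner]
        rw [lintegral_const_mul _ (by fun_prop), ← mul_assoc, sq]
    _ = c ^ 2 * ∫⁻ x, (∫⁻ y, K t y * K y x ∂μ) * F x ∂μ := by
        rw [lintegral_lintegral_swap (by fun_prop)]
        congr 1
        refine lintegral_congr fun x => ?_
        rw [lintegral_mul_const _ (by fun_prop)]
    _ ≤ c ^ 2 * ∫⁻ x, M * F x ∂μ := by gcongr with x; exact hKK x
    _ = c ^ 2 * M * ∫⁻ x, F x ∂μ := by rw [lintegral_const_mul _ hF, mul_assoc]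

theorem IsRDEDensity.ofReal_le_two_mul_lintegral_rdeKernel {μ : Measure ℝ} {f : ℝ → ℝ}
    (hf : IsRDEDensity μ f) (t : ℝ) :
    ENNReal.ofReal (f t) ≤ 2 * ∫⁻ y, rdeKernel t y * ENNReal.ofReal (f y) := by
  obtain ⟨-, h0, -, hvan, heq⟩ := hf
  by_cases ht : t ∈ Icc 0 1
  swap
  · rw [mem_Icc, not_and_or, not_le, not_le] at ht
    simp [hvan t ht]
  have hat : 2 * √t - 1 ≤ t := by nlinarith [Real.sq_sqrt ht.1, sq_nonneg (√t - 1)]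
  have ha : -1 ≤ 2 * √t - 1 := by linarith [Real.sqrt_nonneg t]
  set a := 2 * √t - 1
  have hK : ∫⁻ y, rdeKernel t y * ENNReal.ofReal (f y) =
      ∫⁻ y in Ioc a 1, ENNReal.ofReal (gdens y t * f y) := by
    rw [← lintegral_indicator measurableSet_Ioc]
    refine lintegral_congr fun y => ?_
    simp only [rdeKernel, indicator_apply]
    split_ifs <;> simp [ENNReal.ofReal_mul' (h0 y)]
  rw [heq t ht, hK]
  calc ENNReal.ofReal (2 * (∫ x in a..t, gdens x t * f x) + ∫ x in t..1, (gdens x t - 1) * f x)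
      ≤ 2 * ENNReal.ofReal (∫ x in a..t, gdens x t * f x)
          + ENNReal.ofReal (∫ x in t..1, (gdens x t - 1) * f x) := by
        rw [← ENNReal.ofReal_ofNat 2, ← ENNReal.ofReal_mul zero_le_two]
        exact ENNReal.ofReal_add_le
    _ ≤ 2 * (∫⁻ x in Ioc a t, ENNReal.ofReal (gdens x t * f x))
          + ∫⁻ x in Ioc t 1, ENNReal.ofReal ((gdens x t - 1) * f x) := by
        gcongr
        · exact ofReal_intervalIntegral_le_setLIntegral hat fun x hx =>
            mul_nonneg (gdens_nonneg t (ha.trans hx.1.le)) (h0 x)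
        · exact ofReal_intervalIntegral_le_setLIntegral ht.2 fun x hx =>
            mul_nonneg (sub_nonneg.2 (one_le_gdens ht.1 hx.1)) (h0 x)
    _ ≤ 2 * (∫⁻ x in Ioc a t, ENNReal.ofReal (gdens x t * f x))
          + 2 * ∫⁻ x in Ioc t 1, ENNReal.ofReal (gdens x t * f x) := by
        gcongr 2 * (∫⁻ x in Ioc a t, ENNReal.ofReal (gdens x t * f x)) + ?_
        refine le_trans (lintegral_mono fun x => ENNReal.ofReal_le_ofReal ?_)
          (le_mul_of_one_le_left' one_le_two)
        exact mul_le_mul_of_nonneg_right (sub_le_self _ zero_le_one) (h0 x)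
    _ = 2 * ∫⁻ x in Ioc a 1, ENNReal.ofReal (gdens x t * f x) := by
        rw [← mul_add, ← lintegral_union measurableSet_Ioc (Ioc_disjoint_Ioc_of_le le_rfl),
          Ioc_union_Ioc_eq_Ioc hat ht.2]

/-- The version `f` of the density of the RDE solution satisfying the integral equation is
bounded: `sup_{t ∈ ℝ} f(t) ≤ 109`, i.e. `f(t) ≤ 109` for all `t`. -/
theorem rde_density_bounded (μ : Measure ℝ) (hμ : IsRDESolution μ)
    (f : ℝ → ℝ) (hf : IsRDEDensity μ f) :
    ∀ t : ℝ, f t ≤ 109 := by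
  have hstep := hf.ofReal_le_two_mul_lintegral_rdeKernel
  obtain ⟨hm, -, hdens, hvan, -⟩ := hf
  have htot : ∫⁻ x, ENNReal.ofReal (f x) = 1 := by
    have h1 : μ univ = 1 := hμ.1.measure_univ
    rwa [hdens, withDensity_apply _ MeasurableSet.univ, Measure.restrict_univ] at h1
  intro t
  rcases lt_or_ge t 0 with ht | ht
  · rw [hvan t (Or.inl ht)]
    norm_num
  have hbound := le_mul_lintegral_of_le_lintegral_kernel measurable_rdeKernel
    hm.ennreal_ofReal hstep t (lintegral_rdeKernel_mul_rdeKernel_le ht)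
  rw [htot] at hbound
  have h48 : ENNReal.ofReal (f t) ≤ ENNReal.ofReal 48 := hbound.trans_eq (by norm_num)
  linarith [(ENNReal.ofReal_le_ofReal_iff (by norm_num)).1 h48]
end
end
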